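/- Let X be a quasi-Banach space with continuous quasi-norm, Ω ⊆ ℂ open, and suppose f: Ω → X and g: Ω → ℒ(X,Y)-valued map z ↦ T_z are both analytic (in the sense of locally uniformly convergent power series), with Y a quasi-Banach space and the power series coefficient bounds ‖y_{k,l}‖ ≲ (m+l)!/l! · ε^{-l} sup_{|z'-z₀|<ε}‖T_{z'} x_k‖ as in Kalton–Mitrea. Then z ↦ T_z f(z) is analytic from Ω to Y. -/

import Mathlib

open scoped ENNReal NNReal
open Filter

noncomputable section

section QuasiBanach

variable {Z : Type*} [AddCommGroup Z] [Module ℂ Z]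

/-- `q` is a quasi-Banach quasi-norm (with continuous quasi-norm) on the subspace of `Z`
where it is finite. -/
structure IsQuasiBanach (q : Z → ℝ≥0∞) : Prop where
  map_zero : q 0 = 0
  definite : ∀ x, q x = 0 → x = 0
  smul : ∀ (c : ℂ) (x : Z), q (c • x) = (‖c‖₊ : ℝ≥0∞) * q x
  quasi_triangle : ∃ κ : ℝ≥0, 1 ≤ κ ∧ ∀ x y, q (x + y) ≤ κ * (q x + q y)
  continuous_qnorm : ∀ (x : ℕ → Z) (x₀ : Z),
    Tendsto (fun k => q (x k - x₀)) atTop (nhds 0) →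
    Tendsto (fun k => q (x k)) atTop (nhds (q x₀))
  complete : ∀ x : ℕ → Z, (∀ k, q (x k) < ⊤) →
    (∀ ε : ℝ≥0∞, 0 < ε → ∃ K : ℕ, ∀ m k, K ≤ m → K ≤ k → q (x m - x k) < ε) →
    ∃ x₀, q x₀ < ⊤ ∧ Tendsto (fun k => q (x k - x₀)) atTop (nhds 0)

/-- `f` is analytic on `Ω` with respect to the quasi-norm `q`: around every point it has a
uniformly convergent power series expansion. -/
def QAnalyticOn (q : Z → ℝ≥0∞) (f : ℂ → Z) (Ω : Set ℂ) : Prop :=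
  ∀ z₀ ∈ Ω, ∃ c : ℝ, 0 < c ∧ ∃ x : ℕ → Z,
    ∀ ε : ℝ≥0∞, 0 < ε → ∃ K : ℕ, ∀ m : ℕ, K ≤ m → ∀ z : ℂ, ‖z - z₀‖ < c →
      q (f z - ∑ k ∈ Finset.range m, (z - z₀) ^ k • x k) < ε

end QuasiBanach
section Helpers

variable {Z : Type*} [AddCommGroup Z] [Module ℂ Z]

private lemma qb_neg {q : Z → ℝ≥0∞} (hq : IsQuasiBanach q) (a : Z) : q (-a) = q a := by
  have h := hq.smul (-1) a
  rw [neg_one_smul] at h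
  simpa using h

private lemma qb_sub_le {q : Z → ℝ≥0∞} (hq : IsQuasiBanach q) {κ : ℝ≥0}
    (htri : ∀ a b : Z, q (a + b) ≤ (κ : ℝ≥0∞) * (q a + q b)) (a b : Z) :
    q (a - b) ≤ (κ : ℝ≥0∞) * (q a + q b) := by
  rw [sub_eq_add_neg]
  simpa [qb_neg hq b] using htri a (-b)

private lemma qb_sum_le {q : Z → ℝ≥0∞} (h0 : q 0 = 0) {κ : ℝ≥0}
    (htri : ∀ a b : Z, q (a + b) ≤ (κ : ℝ≥0∞) * (q a + q b)) (a : ℕ → Z) :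
    ∀ n : ℕ, q (∑ i ∈ Finset.range n, a i) ≤
      ∑ i ∈ Finset.range n, (κ : ℝ≥0∞) ^ (i + 1) * q (a i)
  | 0 => by simp [h0]
  | (n + 1) => by
      rw [Finset.sum_range_succ' a, Finset.sum_range_succ'
        (fun i => (κ : ℝ≥0∞) ^ (i + 1) * q (a i))]
      calc q ((∑ i ∈ Finset.range n, a (i + 1)) + a 0)
          ≤ (κ : ℝ≥0∞) * (q (∑ i ∈ Finset.range n, a (i + 1)) + q (a 0)) := htri _ _
        _ ≤ (κ : ℝ≥0∞) * ((∑ i ∈ Finset.range n, (κ : ℝ≥0∞) ^ (i + 1) * q (a (i + 1)))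
              + q (a 0)) := by
            exact mul_le_mul_right (add_le_add (qb_sum_le h0 htri _ n) le_rfl) _
        _ = (∑ i ∈ Finset.range n, (κ : ℝ≥0∞) ^ (i + 1 + 1) * q (a (i + 1)))
              + (κ : ℝ≥0∞) ^ (0 + 1) * q (a 0) := by
            rw [mul_add, Finset.mul_sum]
            congr 1
            · exact Finset.sum_congr rfl fun i _ => by ring
            · rw [zero_add, pow_one]

private lemma fact_bound (m l : ℕ) :
    (m + l).factorial ≤ m.factorial * 2 ^ (m + l) * l.factorial := by
  have h1 : (m + l).choose l ≤ 2 ^ (m + l) := by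
    calc (m + l).choose l ≤ ∑ i ∈ Finset.range (m + l + 1), (m + l).choose i :=
          Finset.single_le_sum (fun i _ => Nat.zero_le _) (Finset.mem_range.mpr (by omega))
      _ = 2 ^ (m + l) := Nat.sum_range_choose (m + l)
  have h3 : (m + l).choose l * l.factorial * (m + l - l).factorial = (m + l).factorial :=
    Nat.choose_mul_factorial_mul_factorial (by omega)
  simp only [Nat.add_sub_cancel] at h3
  calc (m + l).factorial = (m + l).choose l * l.factorial * m.factorial := h3.symm
    _ ≤ 2 ^ (m + l) * l.factorial * m.factorial :=
        Nat.mul_le_mul_right _ (Nat.mul_le_mul_right _ h1)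
    _ = m.factorial * 2 ^ (m + l) * l.factorial := by ring

private lemma fact_div_bound (m l : ℕ) :
    ((m + l).factorial : ℝ≥0∞) / (l.factorial : ℝ≥0∞) ≤ (m.factorial : ℝ≥0∞) * 2 ^ (m + l) := by
  rw [ENNReal.div_le_iff_le_mul
    (Or.inl (by exact_mod_cast (Nat.factorial_pos l).ne'))
    (Or.inl (ENNReal.natCast_ne_top _))]
  calc ((m + l).factorial : ℝ≥0∞)
      ≤ ((m.factorial * 2 ^ (m + l) * l.factorial : ℕ) : ℝ≥0∞) := by
        exact_mod_cast fact_bound m l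
    _ = (m.factorial : ℝ≥0∞) * 2 ^ (m + l) * (l.factorial : ℝ≥0∞) := by push_cast; ring

private lemma geo_half_sum (s : Finset ℕ) {r : ℝ≥0∞} (hr : r ≤ 2⁻¹) :
    ∑ l ∈ s, r ^ l ≤ 2 := by
  calc ∑ l ∈ s, r ^ l ≤ ∑ l ∈ s, (2⁻¹ : ℝ≥0∞) ^ l :=
        Finset.sum_le_sum fun l _ => pow_le_pow_left' hr l
    _ ≤ ∑' l : ℕ, (2⁻¹ : ℝ≥0∞) ^ l := ENNReal.sum_le_tsum s
    _ = 2 := by rw [ENNReal.tsum_geometric, ENNReal.one_sub_inv_two, inv_inv]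

private lemma ratio_le_half {a b : ℝ≥0} (hb : b ≠ 0) (h : 2 * a ≤ b) :
    (a : ℝ≥0∞) * (b : ℝ≥0∞)⁻¹ ≤ 2⁻¹ := by
  have hab : a * b⁻¹ ≤ (2⁻¹ : ℝ≥0) := by
    rw [← div_eq_mul_inv, div_le_iff₀ (pos_iff_ne_zero.mpr hb)]
    calc a = 2⁻¹ * 2 * a := by norm_num
      _ = 2⁻¹ * (2 * a) := by ring
      _ ≤ 2⁻¹ * b := mul_le_mul_right h _
  calc (a : ℝ≥0∞) * (b : ℝ≥0∞)⁻¹ = ((a * b⁻¹ : ℝ≥0) : ℝ≥0∞) := by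
        rw [ENNReal.coe_mul, ENNReal.coe_inv hb]
    _ ≤ ((2⁻¹ : ℝ≥0) : ℝ≥0∞) := ENNReal.coe_le_coe.mpr hab
    _ = 2⁻¹ := by rw [ENNReal.coe_inv (by norm_num)]; norm_num

end Helpers

/-- Composition step in the Stein interpolation lemma for quasi-Banach
spaces: if `f : Ω → X` is analytic and the operator family `z ↦ T_z` is analytic with the
Kalton–Mitrea power series coefficient bounds
‖y_{k,l}‖ ≲ (m+l)!/l! · ε^{−l} sup_{|z'−z₀|<ε} ‖T_{z'} x_k‖ and is locally uniformly
bounded, then z ↦ T_z f(z) is analytic from Ω to Y. -/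
theorem analytic_composition_quasiBanach
    {X Y : Type*} [AddCommGroup X] [Module ℂ X] [AddCommGroup Y] [Module ℂ Y]
    (qX : X → ℝ≥0∞) (qY : Y → ℝ≥0∞)
    (hqX : IsQuasiBanach qX) (hqY : IsQuasiBanach qY)
    (Ω : Set ℂ) (hΩ : IsOpen Ω) (f : ℂ → X) (hf : QAnalyticOn qX f Ω)
    (T : ℂ → X →ₗ[ℂ] Y)
    (hT : ∀ z₀ ∈ Ω, ∃ ε : ℝ, 0 < ε ∧ ∃ (m : ℕ) (Cst Kb : ℝ≥0),
      (∀ (x : X) (z' : ℂ), ‖z' - z₀‖ < ε → qY (T z' x) ≤ Kb * qX x) ∧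
      ∀ x : X, ∃ y : ℕ → Y,
        (∀ l : ℕ, qY (y l) ≤
          Cst * (((m + l).factorial : ℝ≥0∞) / (l.factorial : ℝ≥0∞)) *
            (ENNReal.ofReal (ε ^ l))⁻¹ *
            ⨆ (z' : ℂ) (_ : ‖z' - z₀‖ < ε), qY (T z' x)) ∧
        (∀ δ : ℝ≥0∞, 0 < δ → ∃ K : ℕ, ∀ j : ℕ, K ≤ j → ∀ z : ℂ,
          ‖z - z₀‖ < ε →
            qY (T z x - ∑ l ∈ Finset.range j, (z - z₀) ^ l • y l) < δ)) :
    QAnalyticOn qY (fun z => T z (f z)) Ω := by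
  intro z₀ hz₀
  obtain ⟨c, hc, x, hx⟩ := hf z₀ hz₀
  obtain ⟨εT, hεT, m, Cst, Kb, hKbB, hser⟩ := hT z₀ hz₀
  choose y hybound hyconv using hser
  obtain ⟨κX, hκX1, hκXtri⟩ := hqX.quasi_triangle
  obtain ⟨κY, hκY1, hκYtri⟩ := hqY.quasi_triangle
  set κ : ℝ≥0 := max κX κY with hκdef
  have hκ1 : 1 ≤ κ := le_trans hκX1 (le_max_left _ _)
  have hκR : (0:ℝ) < (κ:ℝ) := by exact_mod_cast lt_of_lt_of_le zero_lt_one hκ1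
  have hκR1 : (1:ℝ) ≤ (κ:ℝ) := by exact_mod_cast hκ1
  have hκE1 : (1:ℝ≥0∞) ≤ (κ:ℝ≥0∞) := by exact_mod_cast hκ1
  have hκE0 : (κ:ℝ≥0∞) ≠ 0 := by
    exact ne_of_gt (lt_of_lt_of_le zero_lt_one hκE1)
  have hκEtop : (κ:ℝ≥0∞) ≠ ⊤ := ENNReal.coe_ne_top
  have hXtri : ∀ a b : X, qX (a + b) ≤ (κ:ℝ≥0∞) * (qX a + qX b) := fun a b =>
    (hκXtri a b).trans (mul_le_mul_left (ENNReal.coe_le_coe.mpr (le_max_left _ _)) _)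
  have hYtri : ∀ a b : Y, qY (a + b) ≤ (κ:ℝ≥0∞) * (qY a + qY b) := fun a b =>
    (hκYtri a b).trans (mul_le_mul_left (ENNReal.coe_le_coe.mpr (le_max_right _ _)) _)
  -- the radius
  set c' : ℝ := min c (min 1 (min (εT / (8 * κ)) (c / (8 * κ)))) with hc'def
  have h8κ : (0:ℝ) < 8 * κ := by positivity
  have hc'pos : 0 < c' :=
    lt_min hc (lt_min one_pos (lt_min (div_pos hεT h8κ) (div_pos hc h8κ)))
  -- geometric bound on the coefficients of f
  obtain ⟨Kf, hKf⟩ := hx 1 zero_lt_one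
  set sNN : ℝ≥0 := Real.toNNReal (c / 2) with hsdef
  have hsNN0 : sNN ≠ 0 := by
    rw [hsdef]; exact (Real.toNNReal_pos.mpr (by linarith)).ne'
  have hxk : ∀ k, Kf ≤ k → qX (x k) ≤ 2 * (κ:ℝ≥0∞) / ((sNN:ℝ≥0∞)) ^ k := by
    intro k hk
    set z₁ : ℂ := z₀ + ((c/2 : ℝ) : ℂ) with hz₁
    have hz₁sub : z₁ - z₀ = ((c/2 : ℝ) : ℂ) := by rw [hz₁]; ring
    have habs : ‖z₁ - z₀‖ < c := by
      rw [hz₁sub, Complex.norm_real, Real.norm_eq_abs, abs_of_nonneg (by linarith)]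
      linarith
    have h1 := hKf k hk z₁ habs
    have h2 := hKf (k+1) (hk.trans (Nat.le_succ k)) z₁ habs
    have hdiff : (z₁ - z₀) ^ k • x k
        = (f z₁ - ∑ j ∈ Finset.range k, (z₁ - z₀) ^ j • x j)
          - (f z₁ - ∑ j ∈ Finset.range (k+1), (z₁ - z₀) ^ j • x j) := by
      rw [Finset.sum_range_succ]; abel
    have hnn : ‖((c/2:ℝ) : ℂ)‖₊ = sNN := by
      apply NNReal.coe_injective
      rw [coe_nnnorm, Complex.norm_real, Real.norm_eq_abs, abs_of_nonneg (by linarith),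
        hsdef, Real.coe_toNNReal _ (by linarith)]
    have hkey : ((sNN : ℝ≥0∞)) ^ k * qX (x k) ≤ 2 * (κ:ℝ≥0∞) := by
      have e1 : qX ((z₁ - z₀) ^ k • x k) = ((sNN:ℝ≥0∞)) ^ k * qX (x k) := by
        rw [hqX.smul, hz₁sub, nnnorm_pow, hnn, ENNReal.coe_pow]
      rw [← e1, hdiff]
      refine (qb_sub_le hqX hXtri _ _).trans ?_
      calc (κ:ℝ≥0∞) * (qX (f z₁ - ∑ j ∈ Finset.range k, (z₁ - z₀) ^ j • x j)
              + qX (f z₁ - ∑ j ∈ Finset.range (k+1), (z₁ - z₀) ^ j • x j))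
          ≤ (κ:ℝ≥0∞) * (1 + 1) := mul_le_mul_right (add_le_add h1.le h2.le) _
        _ = 2 * (κ:ℝ≥0∞) := by ring
    rw [ENNReal.le_div_iff_mul_le
      (Or.inl (pow_ne_zero _ (ENNReal.coe_ne_zero.mpr hsNN0)))
      (Or.inl (ENNReal.pow_ne_top ENNReal.coe_ne_top))]
    rw [mul_comm]
    exact hkey
  -- the coefficients of the composition
  refine ⟨c', hc'pos, fun n => ∑ k ∈ Finset.range (n + 1), y (x k) (n - k), ?_⟩
  intro ε hε
  set εTN : ℝ≥0 := Real.toNNReal εT with hεTNdef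
  have hεTN0 : εTN ≠ 0 := by
    rw [hεTNdef]; exact (Real.toNNReal_pos.mpr hεT).ne'
  have hSup : ∀ k : ℕ, (⨆ (z' : ℂ) (_ : ‖z' - z₀‖ < εT), qY (T z' (x k)))
      ≤ (Kb:ℝ≥0∞) * qX (x k) := fun k => iSup₂_le fun z' hz' => hKbB (x k) z' hz'
  have hyb : ∀ k l : ℕ, qY (y (x k) l) ≤
      (Cst:ℝ≥0∞) * ((m.factorial : ℝ≥0∞) * 2 ^ (m + l)) * ((εTN:ℝ≥0∞)⁻¹) ^ l *
        ((Kb:ℝ≥0∞) * qX (x k)) := by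
    intro k l
    refine (hybound (x k) l).trans ?_
    have hof : (ENNReal.ofReal (εT ^ l))⁻¹ = ((εTN:ℝ≥0∞)⁻¹) ^ l := by
      rw [ENNReal.ofReal_pow hεT.le, ← ENNReal.inv_pow, hεTNdef]
      rfl
    rw [hof]
    gcongr
    · exact fact_div_bound m l
    · exact hSup k
  set ε' : ℝ≥0∞ := min ε 1 with hε'def
  have hε'0 : ε' ≠ 0 := (lt_min hε zero_lt_one).ne'
  have hε'top : ε' ≠ ⊤ := ne_top_of_le_ne_top ENNReal.one_ne_top (min_le_right _ _)
  have hε'le : ε' ≤ ε := min_le_left _ _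
  set ε₁ : ℝ≥0∞ := ε' / (4 * (κ:ℝ≥0∞)) with hε₁def
  have hε₁0 : ε₁ ≠ 0 := by
    rw [hε₁def]
    exact (ENNReal.div_pos hε'0 (ENNReal.mul_ne_top (by simp) hκEtop)).ne'
  have hε₁pos : 0 < ε₁ := pos_iff_ne_zero.mpr hε₁0
  set D₁ : ℝ≥0∞ := 2 * (κ:ℝ≥0∞) * (m.factorial : ℝ≥0∞) * 2 ^ m * Cst * Kb with hD₁def
  have hD₁top : D₁ ≠ ⊤ := by
    rw [hD₁def]
    exact ENNReal.mul_ne_top (ENNReal.mul_ne_top (ENNReal.mul_ne_top (ENNReal.mul_ne_top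
      (ENNReal.mul_ne_top (by simp) hκEtop) (ENNReal.natCast_ne_top _))
      (by simp [ENNReal.pow_ne_top])) ENNReal.coe_ne_top) ENNReal.coe_ne_top
  set D : ℝ≥0∞ := (κ:ℝ≥0∞) * ((Kb:ℝ≥0∞) + D₁) with hDdef
  have hDtop : D ≠ ⊤ := by
    rw [hDdef]
    exact ENNReal.mul_ne_top hκEtop (ENNReal.add_ne_top.mpr ⟨ENNReal.coe_ne_top, hD₁top⟩)
  have htends : Filter.Tendsto
      (fun n : ℕ => (4 * (κ:ℝ≥0∞) ^ 2 * D) * (2⁻¹ : ℝ≥0∞) ^ n) Filter.atTop (nhds 0) := by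
    have h := ENNReal.tendsto_pow_atTop_nhds_zero_of_lt_one
      (by norm_num : (2⁻¹ : ℝ≥0∞) < 1)
    simpa using ENNReal.Tendsto.const_mul h (Or.inr (ENNReal.mul_ne_top
      (ENNReal.mul_ne_top (by simp) (ENNReal.pow_ne_top hκEtop)) hDtop))
  obtain ⟨K₁, hK₁lt, hK₁Kf⟩ := ((htends.eventually (gt_mem_nhds hε₁pos)).and
    (Filter.eventually_ge_atTop Kf)).exists
  set denom : ℝ≥0∞ := (K₁ : ℝ≥0∞) * (κ:ℝ≥0∞) ^ K₁ + 1 with hdenomdef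
  have hdenomtop : denom ≠ ⊤ := by
    rw [hdenomdef]
    exact ENNReal.add_ne_top.mpr ⟨ENNReal.mul_ne_top (ENNReal.natCast_ne_top _)
      (ENNReal.pow_ne_top hκEtop), ENNReal.one_ne_top⟩
  set δh : ℝ≥0∞ := ε₁ / denom with hδhdef
  have hδh0 : 0 < δh := by rw [hδhdef]; exact ENNReal.div_pos hε₁0 hdenomtop
  choose Kk hKk using fun k : ℕ => hyconv (x k) δh hδh0
  set M : ℕ := (Finset.range K₁).sup Kk with hMdef
  set δf : ℝ≥0∞ := ε₁ / ((Kb:ℝ≥0∞) + 1) with hδfdef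
  have hδf0 : 0 < δf := by
    rw [hδfdef]
    exact ENNReal.div_pos hε₁0 (ENNReal.add_ne_top.mpr ⟨ENNReal.coe_ne_top, ENNReal.one_ne_top⟩)
  obtain ⟨Kf2, hKf2⟩ := hx δf hδf0
  refine ⟨max Kf2 (K₁ + M), ?_⟩
  intro N hN z hz
  have hNKf2 : Kf2 ≤ N := le_trans (le_max_left _ _) hN
  have hNK₁M : K₁ + M ≤ N := le_trans (le_max_right _ _) hN
  have hK₁N : K₁ ≤ N := by omega
  -- facts about z
  have hzc : ‖z - z₀‖ < c := lt_of_lt_of_le hz (min_le_left _ _)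
  have hzc1 : ‖z - z₀‖ < 1 :=
    lt_of_lt_of_le hz ((min_le_right _ _).trans (min_le_left _ _))
  have hzεT8 : ‖z - z₀‖ < εT / (8 * κ) :=
    lt_of_lt_of_le hz ((min_le_right _ _).trans ((min_le_right _ _).trans (min_le_left _ _)))
  have hzc8 : ‖z - z₀‖ < c / (8 * κ) :=
    lt_of_lt_of_le hz ((min_le_right _ _).trans ((min_le_right _ _).trans (min_le_right _ _)))
  have hzεT : ‖z - z₀‖ < εT :=
    lt_of_lt_of_le hzεT8 (div_le_self hεT.le (by linarith))
  set ntE : ℝ≥0∞ := ((‖z - z₀‖₊ : ℝ≥0) : ℝ≥0∞) with hntdef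
  have habs_eq : ‖z - z₀‖ = ‖z - z₀‖ := rfl
  have hnt1 : ntE ≤ 1 := by
    rw [hntdef]
    exact_mod_cast le_of_lt (show (‖z - z₀‖₊ : ℝ) < 1 by
      rw [coe_nnnorm, habs_eq]; exact hzc1)
  have hρ1 : 2 * (κ:ℝ≥0∞) * ntE * ((εTN:ℝ≥0∞))⁻¹ ≤ 2⁻¹ := by
    have hreal : 2 * (2 * κ * ‖z - z₀‖₊) ≤ εTN := by
      rw [← NNReal.coe_le_coe]
      push_cast
      rw [habs_eq, hεTNdef, Real.coe_toNNReal _ hεT.le]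
      have h8 : ‖z - z₀‖ * (8 * κ) < εT := (lt_div_iff₀ h8κ).mp hzεT8
      nlinarith [mul_nonneg hκR.le (norm_nonneg (z - z₀))]
    have h2 := ratio_le_half hεTN0 hreal
    calc 2 * (κ:ℝ≥0∞) * ntE * ((εTN:ℝ≥0∞))⁻¹
        = ((2 * κ * ‖z - z₀‖₊ : ℝ≥0) : ℝ≥0∞) * ((εTN:ℝ≥0∞))⁻¹ := by
          rw [hntdef]; push_cast; ring
      _ ≤ 2⁻¹ := h2
  have hρ2 : (κ:ℝ≥0∞) * ntE * ((sNN:ℝ≥0∞))⁻¹ ≤ 2⁻¹ := by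
    have hreal : 2 * (κ * ‖z - z₀‖₊) ≤ sNN := by
      rw [← NNReal.coe_le_coe]
      push_cast
      rw [habs_eq, hsdef, Real.coe_toNNReal _ (by linarith : (0:ℝ) ≤ c/2)]
      have h8 : ‖z - z₀‖ * (8 * κ) < c := (lt_div_iff₀ h8κ).mp hzc8
      nlinarith [mul_nonneg hκR.le (norm_nonneg (z - z₀))]
    have h2 := ratio_le_half hsNN0 hreal
    calc (κ:ℝ≥0∞) * ntE * ((sNN:ℝ≥0∞))⁻¹
        = ((κ * ‖z - z₀‖₊ : ℝ≥0) : ℝ≥0∞) * ((sNN:ℝ≥0∞))⁻¹ := by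
          rw [hntdef]; push_cast; ring
      _ ≤ 2⁻¹ := h2
  have hsmul : ∀ (n : ℕ) (v : Y), qY ((z - z₀) ^ n • v) = ntE ^ n * qY v := by
    intro n v
    rw [hntdef, hqY.smul, nnnorm_pow, ENNReal.coe_pow]
  -- uniform bound on the partial sums of the series of T z (x k)
  have hpart : ∀ (k j : ℕ),
      qY (∑ l ∈ Finset.range j, (z - z₀) ^ l • y (x k) l) ≤ D₁ * qX (x k) := by
    intro k j
    refine (qb_sum_le hqY.map_zero hYtri _ j).trans ?_
    have hterm : ∀ l : ℕ, (κ:ℝ≥0∞) ^ (l + 1) * qY ((z - z₀) ^ l • y (x k) l) ≤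
        ((κ:ℝ≥0∞) * Cst * (m.factorial:ℝ≥0∞) * 2 ^ m * Kb * qX (x k)) *
          (2 * (κ:ℝ≥0∞) * ntE * ((εTN:ℝ≥0∞))⁻¹) ^ l := by
      intro l
      rw [hsmul l]
      calc (κ:ℝ≥0∞) ^ (l+1) * (ntE ^ l * qY (y (x k) l))
          ≤ (κ:ℝ≥0∞) ^ (l+1) * (ntE ^ l *
            ((Cst:ℝ≥0∞) * ((m.factorial : ℝ≥0∞) * 2 ^ (m + l)) * ((εTN:ℝ≥0∞)⁻¹) ^ l *
              ((Kb:ℝ≥0∞) * qX (x k)))) := by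
            exact mul_le_mul_right (mul_le_mul_right (hyb k l) _) _
        _ = ((κ:ℝ≥0∞) * Cst * (m.factorial:ℝ≥0∞) * 2 ^ m * Kb * qX (x k)) *
            (2 * (κ:ℝ≥0∞) * ntE * ((εTN:ℝ≥0∞))⁻¹) ^ l := by
            rw [pow_add, pow_succ]
            ring
    calc ∑ l ∈ Finset.range j, (κ:ℝ≥0∞) ^ (l + 1) * qY ((z - z₀) ^ l • y (x k) l)
        ≤ ∑ l ∈ Finset.range j,
            ((κ:ℝ≥0∞) * Cst * (m.factorial:ℝ≥0∞) * 2 ^ m * Kb * qX (x k)) *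
            (2 * (κ:ℝ≥0∞) * ntE * ((εTN:ℝ≥0∞))⁻¹) ^ l :=
          Finset.sum_le_sum fun l _ => hterm l
      _ = ((κ:ℝ≥0∞) * Cst * (m.factorial:ℝ≥0∞) * 2 ^ m * Kb * qX (x k)) *
            ∑ l ∈ Finset.range j, (2 * (κ:ℝ≥0∞) * ntE * ((εTN:ℝ≥0∞))⁻¹) ^ l := by
          rw [← Finset.mul_sum]
      _ ≤ ((κ:ℝ≥0∞) * Cst * (m.factorial:ℝ≥0∞) * 2 ^ m * Kb * qX (x k)) * 2 :=
          mul_le_mul_right (geo_half_sum _ hρ1) _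
      _ = D₁ * qX (x k) := by rw [hD₁def]; ring
  have hR : ∀ (k j : ℕ),
      qY (T z (x k) - ∑ l ∈ Finset.range j, (z - z₀) ^ l • y (x k) l) ≤ D * qX (x k) := by
    intro k j
    refine (qb_sub_le hqY hYtri _ _).trans ?_
    calc (κ:ℝ≥0∞) * (qY (T z (x k)) + qY (∑ l ∈ Finset.range j, (z - z₀) ^ l • y (x k) l))
        ≤ (κ:ℝ≥0∞) * ((Kb:ℝ≥0∞) * qX (x k) + D₁ * qX (x k)) :=
          mul_le_mul_right (add_le_add (hKbB (x k) z hzεT) (hpart k j)) _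
      _ = D * qX (x k) := by rw [hDdef]; ring
  show qY (T z (f z) - ∑ n ∈ Finset.range N, (z - z₀) ^ n •
      ∑ k ∈ Finset.range (n + 1), y (x k) (n - k)) < ε
  set S : X := ∑ k ∈ Finset.range N, (z - z₀) ^ k • x k with hSdef
  set P : Y := ∑ n ∈ Finset.range N, (z - z₀) ^ n •
      ∑ k ∈ Finset.range (n + 1), y (x k) (n - k) with hPdef
  have hPsum : P = ∑ k ∈ Finset.range N, (z - z₀) ^ k •
      (∑ l ∈ Finset.range (N - k), (z - z₀) ^ l • y (x k) l) := by
    rw [hPdef]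
    have h1 : ∀ n ∈ Finset.range N,
        (z - z₀) ^ n • (∑ k ∈ Finset.range (n + 1), y (x k) (n - k))
        = ∑ k ∈ Finset.range (n + 1),
            (fun k l => (z - z₀) ^ (k + l) • y (x k) l) k (n - k) := by
      intro n _
      rw [Finset.smul_sum]
      refine Finset.sum_congr rfl fun k hk => ?_
      have hkn : k + (n - k) = n :=
        Nat.add_sub_cancel' (Nat.lt_succ_iff.mp (Finset.mem_range.mp hk))
      simp only [hkn]
    rw [Finset.sum_congr rfl h1,
      Finset.sum_range_diag_flip N (fun k l => (z - z₀) ^ (k + l) • y (x k) l)]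
    refine Finset.sum_congr rfl fun k _ => ?_
    rw [Finset.smul_sum]
    refine Finset.sum_congr rfl fun l _ => ?_
    rw [pow_add, mul_smul]
  have hTS : T z S = ∑ k ∈ Finset.range N, (z - z₀) ^ k • T z (x k) := by
    rw [hSdef, map_sum]
    exact Finset.sum_congr rfl fun k _ => by rw [map_smul]
  have hsplitEq : T z (f z) - P = (T z (f z) - T z S) + (T z S - P) := by abel
  have hq1 : qY (T z (f z) - T z S) ≤ ε₁ := by
    rw [← map_sub]
    refine le_trans (hKbB _ z hzεT) ?_
    have h := hKf2 N hNKf2 z hzc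
    calc (Kb:ℝ≥0∞) * qX (f z - S) ≤ (Kb:ℝ≥0∞) * δf := mul_le_mul_right h.le _
      _ ≤ ((Kb:ℝ≥0∞) + 1) * δf := mul_le_mul_left le_self_add _
      _ ≤ ε₁ := by rw [hδfdef]; exact ENNReal.mul_div_le
  have hq2 : qY (T z S - P) ≤ ε₁ + ε₁ := by
    have hdiff : T z S - P = ∑ k ∈ Finset.range N, (z - z₀) ^ k •
        (T z (x k) - ∑ l ∈ Finset.range (N - k), (z - z₀) ^ l • y (x k) l) := by
      rw [hTS, hPsum, ← Finset.sum_sub_distrib]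
      exact Finset.sum_congr rfl fun k _ => by rw [smul_sub]
    rw [hdiff]
    refine le_trans (qb_sum_le hqY.map_zero hYtri _ N) ?_
    rw [← Finset.sum_range_add_sum_Ico _ hK₁N]
    refine add_le_add ?_ ?_
    · -- head
      have hhead : ∀ k ∈ Finset.range K₁, (κ:ℝ≥0∞) ^ (k + 1) *
          qY ((z - z₀) ^ k •
            (T z (x k) - ∑ l ∈ Finset.range (N - k), (z - z₀) ^ l • y (x k) l))
          ≤ (κ:ℝ≥0∞) ^ K₁ * δh := by
        intro k hk
        have hkK₁ : k < K₁ := Finset.mem_range.mp hk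
        have hKkle : Kk k ≤ N - k := by
          have h1 : Kk k ≤ M := by rw [hMdef]; exact Finset.le_sup hk
          omega
        have hRlt := hKk k (N - k) hKkle z hzεT
        rw [hsmul]
        calc (κ:ℝ≥0∞) ^ (k + 1) * (ntE ^ k *
              qY (T z (x k) - ∑ l ∈ Finset.range (N - k), (z - z₀) ^ l • y (x k) l))
            ≤ (κ:ℝ≥0∞) ^ K₁ * (1 * δh) :=
              mul_le_mul' (pow_le_pow_right₀ hκE1 (by omega))
                (mul_le_mul' (pow_le_one' hnt1 k) hRlt.le)
          _ = (κ:ℝ≥0∞) ^ K₁ * δh := by rw [one_mul]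
      refine le_trans (Finset.sum_le_sum hhead) ?_
      rw [Finset.sum_const, Finset.card_range, nsmul_eq_mul]
      calc (K₁:ℝ≥0∞) * ((κ:ℝ≥0∞) ^ K₁ * δh) = ((K₁:ℝ≥0∞) * (κ:ℝ≥0∞) ^ K₁) * δh := by ring
        _ ≤ denom * δh := mul_le_mul_left (by rw [hdenomdef]; exact le_self_add) _
        _ ≤ ε₁ := by rw [hδhdef]; exact ENNReal.mul_div_le
    · -- tail
      have htail : ∀ k ∈ Finset.Ico K₁ N, (κ:ℝ≥0∞) ^ (k + 1) *
          qY ((z - z₀) ^ k •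
            (T z (x k) - ∑ l ∈ Finset.range (N - k), (z - z₀) ^ l • y (x k) l))
          ≤ (2 * (κ:ℝ≥0∞) ^ 2 * D) * (2⁻¹ : ℝ≥0∞) ^ k := by
        intro k hk
        have hkK₁ : K₁ ≤ k := (Finset.mem_Ico.mp hk).1
        have hkKf : Kf ≤ k := le_trans hK₁Kf hkK₁
        rw [hsmul]
        calc (κ:ℝ≥0∞) ^ (k + 1) * (ntE ^ k *
              qY (T z (x k) - ∑ l ∈ Finset.range (N - k), (z - z₀) ^ l • y (x k) l))
            ≤ (κ:ℝ≥0∞) ^ (k + 1) * (ntE ^ k * (D * (2 * (κ:ℝ≥0∞) / (sNN:ℝ≥0∞) ^ k))) := by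
              refine mul_le_mul_right (mul_le_mul_right ?_ _) _
              exact le_trans (hR k (N - k)) (mul_le_mul_right (hxk k hkKf) _)
          _ = (2 * (κ:ℝ≥0∞) ^ 2 * D) * ((κ:ℝ≥0∞) * ntE * ((sNN:ℝ≥0∞))⁻¹) ^ k := by
              rw [div_eq_mul_inv, ENNReal.inv_pow, pow_succ]
              ring
          _ ≤ (2 * (κ:ℝ≥0∞) ^ 2 * D) * (2⁻¹ : ℝ≥0∞) ^ k :=
              mul_le_mul_right (pow_le_pow_left' hρ2 k) _
      refine le_trans (Finset.sum_le_sum htail) ?_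
      rw [← Finset.mul_sum]
      have hgeo : ∑ k ∈ Finset.Ico K₁ N, (2⁻¹ : ℝ≥0∞) ^ k ≤ (2⁻¹ : ℝ≥0∞) ^ K₁ * 2 := by
        rw [Finset.sum_Ico_eq_sum_range]
        calc ∑ i ∈ Finset.range (N - K₁), (2⁻¹ : ℝ≥0∞) ^ (K₁ + i)
            = (2⁻¹ : ℝ≥0∞) ^ K₁ * ∑ i ∈ Finset.range (N - K₁), (2⁻¹ : ℝ≥0∞) ^ i := by
              rw [Finset.mul_sum]
              exact Finset.sum_congr rfl fun i _ => by rw [pow_add]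
          _ ≤ (2⁻¹ : ℝ≥0∞) ^ K₁ * 2 := mul_le_mul_right (geo_half_sum _ le_rfl) _
      calc (2 * (κ:ℝ≥0∞) ^ 2 * D) * ∑ k ∈ Finset.Ico K₁ N, (2⁻¹ : ℝ≥0∞) ^ k
          ≤ (2 * (κ:ℝ≥0∞) ^ 2 * D) * ((2⁻¹ : ℝ≥0∞) ^ K₁ * 2) := mul_le_mul_right hgeo _
        _ = (4 * (κ:ℝ≥0∞) ^ 2 * D) * (2⁻¹ : ℝ≥0∞) ^ K₁ := by ring
        _ ≤ ε₁ := hK₁lt.le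
  refine lt_of_lt_of_le ?_ hε'le
  calc qY (T z (f z) - P) = qY ((T z (f z) - T z S) + (T z S - P)) := by rw [hsplitEq]
    _ ≤ (κ:ℝ≥0∞) * (qY (T z (f z) - T z S) + qY (T z S - P)) := hYtri _ _
    _ ≤ (κ:ℝ≥0∞) * (ε₁ + (ε₁ + ε₁)) := mul_le_mul_right (add_le_add hq1 hq2) _
    _ = 3 * ((κ:ℝ≥0∞) * ε₁) := by ring
    _ = 3 * (ε' / 4) := by
        rw [hε₁def, mul_comm (4:ℝ≥0∞) ((κ:ℝ≥0∞)), ← mul_div_assoc,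
          ENNReal.mul_div_mul_left _ _ hκE0 hκEtop]
    _ < ε' := by
        rw [← mul_div_assoc, ENNReal.div_lt_iff (Or.inl (by norm_num)) (Or.inl (by norm_num)),
          mul_comm (3:ℝ≥0∞) ε', mul_comm ε' (4:ℝ≥0∞), mul_comm (4:ℝ≥0∞) ε']
        exact ENNReal.mul_lt_mul_right hε'0 hε'top (by norm_num)
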